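/- Let T > 0, let M : ℝ^n → (J × n real matrices) be continuous with c > 0 such that ‖M(x) y‖ ≥ c ‖y‖ for all x, y ∈ ℝ^n, and let v ∈ ℝ^n. Let Φ_f, Φ_1 : [0,T] × ℝ^n → ℝ be continuous and bounded, with Φ_1 ≥ 0 and Φ_1(T,v) > 0. Then lim_{t → T⁻} ( ∫_{ℝ^n} Φ_f(t,q) exp(−‖M(q)(q−v)‖²/(2(T−t))) dq ) / ( ∫_{ℝ^n} Φ_1(t,q) exp(−‖M(q)(q−v)‖²/(2(T−t))) dq ) = Φ_f(T,v) / Φ_1(T,v); in particular the denominator is strictly positive for t sufficiently close to T. -/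

import Mathlib

/-!
Substituting `q = v + √(T - t) • y` writes each integral as `(T - t) ^ (n / 2)` times
`∫ Φ (t, v + √(T - t) • y) * exp (-‖M (v + √(T - t) • y) y‖² / 2) dy`,
and the prefactor cancels in the ratio. As `‖M x y‖ ≥ c ‖y‖`, these integrands are
dominated by `C * exp (-c² ‖y‖² / 2)`, so by dominated convergence they tend to
`Φ (T, v) * ∫ exp (-‖M v y‖² / 2) dy`, and this last integral is positive.
-/

open MeasureTheory Matrix

/-- The Euclidean norm of a vector in `ℝ^k`. -/
noncomputable def euclidNorm {k : ℕ} (v : Fin k → ℝ) : ℝ :=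
  ‖(EuclideanSpace.equiv (Fin k) ℝ).symm v‖

open Filter Topology Set

section Rescaling

variable {E : Type*} [NormedAddCommGroup E] [NormedSpace ℝ E]

theorem integral_eq_pow_mul_integral_comp_add_smul [MeasurableSpace E] [BorelSpace E]
    [FiniteDimensional ℝ E] (μ : Measure E) [μ.IsAddHaarMeasure] (f : E → ℝ) (v : E)
    {s : ℝ} (hs : 0 < s) :
    ∫ q, f q ∂μ = s ^ Module.finrank ℝ E * ∫ y, f (v + s • y) ∂μ := by
  rw [Measure.integral_comp_smul_of_nonneg μ (fun x => f (v + x)) s (hR := hs.le),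
    integral_add_left_eq_self (fun x => f x) v, smul_eq_mul, ← mul_assoc,
    mul_inv_cancel₀ (by positivity), one_mul]

theorem tendsto_add_sqrt_sub_smul_nhdsWithin (T : ℝ) (v y : E) :
    Tendsto (fun t => (t, v + √(T - t) • y)) (𝓝[Ioo 0 T] T)
      (𝓝[Icc 0 T ×ˢ univ] (T, v)) := by
  have hsqrt : Tendsto (fun t => √(T - t)) (𝓝[Ioo 0 T] T) (𝓝 0) := by
    have hcont : Continuous fun t : ℝ => √(T - t) := by fun_prop
    simpa using (hcont.tendsto T).mono_left nhdsWithin_le_nhds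
  refine tendsto_nhdsWithin_iff.2 ⟨(tendsto_nhdsWithin_iff.1 tendsto_id).1.prodMk_nhds ?_, ?_⟩
  · simpa using tendsto_const_nhds.add (hsqrt.smul_const y)
  · filter_upwards [self_mem_nhdsWithin] with t ht using ⟨Ioo_subset_Icc_self ht, trivial⟩

theorem tendsto_integral_rescaled [MeasurableSpace E] [OpensMeasurableSpace E] {μ : Measure E}
    {T : ℝ} (hT : 0 < T) {Φ : ℝ → E → ℝ}
    (hΦ : ContinuousOn (fun z : ℝ × E => Φ z.1 z.2) (Icc 0 T ×ˢ univ)) {C : ℝ}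
    (hΦC : ∀ t ∈ Icc 0 T, ∀ q, |Φ t q| ≤ C) {K : E → E → ℝ}
    (hK : Continuous fun z : E × E => K z.1 z.2) {g : E → ℝ} (hg : Integrable g μ)
    (hKg : ∀ x y, |K x y| ≤ g y) (v : E) :
    Tendsto (fun t => ∫ y, Φ t (v + √(T - t) • y) * K (v + √(T - t) • y) y ∂μ)
      (𝓝[Ioo 0 T] T) (𝓝 (Φ T v * ∫ y, K v y ∂μ)) := by
  rw [← integral_const_mul]
  refine tendsto_integral_filter_of_dominated_convergence (fun y => C * g y) ?_ ?_
    (hg.const_mul C) (Eventually.of_forall fun y => ?_)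
  · filter_upwards [self_mem_nhdsWithin] with t ht
    have hΦt : Continuous (Φ t) := hΦ.comp_continuous (continuous_const.prodMk continuous_id)
      fun _ => ⟨Ioo_subset_Icc_self ht, trivial⟩
    have hx : Continuous fun y : E => v + √(T - t) • y :=
      continuous_const.add (continuous_const_smul _)
    exact ((hΦt.comp hx).mul (hK.comp (hx.prodMk continuous_id))).aestronglyMeasurable
  · filter_upwards [self_mem_nhdsWithin] with t ht
    refine Eventually.of_forall fun y => ?_
    have hΦty := hΦC t (Ioo_subset_Icc_self ht) (v + √(T - t) • y)
    rw [Real.norm_eq_abs, abs_mul]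
    exact mul_le_mul hΦty (hKg _ y) (abs_nonneg _) ((abs_nonneg _).trans hΦty)
  · have hlim := tendsto_add_sqrt_sub_smul_nhdsWithin T v y
    have hΦlim := (hΦ (T, v) ⟨⟨hT.le, le_rfl⟩, trivial⟩).tendsto.comp hlim
    have hKy : Continuous fun x => K x y := hK.comp (continuous_id.prodMk continuous_const)
    have hKlim := (hKy.tendsto v).comp
      ((continuous_snd.tendsto _).comp (hlim.mono_right nhdsWithin_le_nhds))
    exact hΦlim.mul hKlim

end Rescaling

section EuclidNorm

variable {k : ℕ}

theorem euclidNorm_smul (s : ℝ) (w : Fin k → ℝ) :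
    euclidNorm (s • w) = |s| * euclidNorm w := by
  rw [euclidNorm, euclidNorm, map_smul, norm_smul, Real.norm_eq_abs]

theorem continuous_euclidNorm : Continuous (euclidNorm (k := k)) :=
  (EuclideanSpace.equiv (Fin k) ℝ).symm.continuous.norm

theorem euclidNorm_sq (v : Fin k → ℝ) : euclidNorm v ^ 2 = ∑ i, v i ^ 2 := by
  rw [euclidNorm, EuclideanSpace.norm_eq, Real.sq_sqrt (by positivity)]
  simp [sq_abs]

theorem integrable_exp_neg_mul_euclidNorm_sq {b : ℝ} (hb : 0 < b) :
    Integrable fun y : Fin k → ℝ => Real.exp (-b * euclidNorm y ^ 2) := by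
  refine (Integrable.fintype_prod (f := fun _ x => Real.exp (-b * x ^ 2))
    fun _ => integrable_exp_neg_mul_sq hb).congr (Eventually.of_forall fun y => ?_)
  simp only [← Real.exp_sum, euclidNorm_sq, Finset.mul_sum]

end EuclidNorm

theorem exp_neg_sq_div_two_le {a b c : ℝ} (hc : 0 ≤ c) (hb : 0 ≤ b) (h : c * b ≤ a) :
    Real.exp (-a ^ 2 / 2) ≤ Real.exp (-(c ^ 2 / 2) * b ^ 2) := by
  rw [Real.exp_le_exp]
  nlinarith [pow_le_pow_left₀ (mul_nonneg hc hb) h 2]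

theorem integral_mul_exp_neg_sq_div_eq_rescaled {n J : ℕ}
    (M : (Fin n → ℝ) → Matrix (Fin J) (Fin n) ℝ) (v : Fin n → ℝ) (φ : (Fin n → ℝ) → ℝ)
    {τ : ℝ} (hτ : 0 < τ) :
    ∫ q, φ q * Real.exp (-euclidNorm (M q *ᵥ (q - v)) ^ 2 / (2 * τ)) =
      √τ ^ n *
        ∫ y, φ (v + √τ • y) * Real.exp (-euclidNorm (M (v + √τ • y) *ᵥ y) ^ 2 / 2) := by
  have hs : 0 < √τ := Real.sqrt_pos.2 hτ
  rw [integral_eq_pow_mul_integral_comp_add_smul volume _ v hs, Module.finrank_fin_fun]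
  congr 1
  refine integral_congr_ae (Eventually.of_forall fun y => ?_)
  simp only [add_sub_cancel_left, mulVec_smul, euclidNorm_smul, abs_of_pos hs, mul_pow,
    Real.sq_sqrt hτ.le]
  field_simp

theorem gaussian_ratio_limit_general (n J : ℕ) (T : ℝ) (hT : 0 < T)
    (M : (Fin n → ℝ) → Matrix (Fin J) (Fin n) ℝ) (hM : Continuous M)
    (c : ℝ) (hc : 0 < c) (hMc : ∀ x y : Fin n → ℝ, c * euclidNorm y ≤ euclidNorm (M x *ᵥ y))
    (v : Fin n → ℝ)
    (Φf Φ1 : ℝ → (Fin n → ℝ) → ℝ)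
    (hΦfcont : ContinuousOn (fun z : ℝ × (Fin n → ℝ) => Φf z.1 z.2)
      (Set.Icc 0 T ×ˢ Set.univ))
    (Cf : ℝ) (hΦfbdd : ∀ t ∈ Set.Icc (0 : ℝ) T, ∀ q : Fin n → ℝ, |Φf t q| ≤ Cf)
    (hΦ1cont : ContinuousOn (fun z : ℝ × (Fin n → ℝ) => Φ1 z.1 z.2)
      (Set.Icc 0 T ×ˢ Set.univ))
    (C1 : ℝ) (hΦ1bdd : ∀ t ∈ Set.Icc (0 : ℝ) T, ∀ q : Fin n → ℝ, |Φ1 t q| ≤ C1)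
    (hΦ1pos : 0 < Φ1 T v) :
    Filter.Tendsto
      (fun t : ℝ =>
        (∫ q : Fin n → ℝ,
            Φf t q * Real.exp (-euclidNorm (M q *ᵥ (q - v)) ^ 2 / (2 * (T - t))))
          / ∫ q : Fin n → ℝ,
              Φ1 t q * Real.exp (-euclidNorm (M q *ᵥ (q - v)) ^ 2 / (2 * (T - t))))
      (nhdsWithin T (Set.Ioo 0 T))
      (nhds (Φf T v / Φ1 T v)) ∧
    ∀ᶠ t in nhdsWithin T (Set.Ioo 0 T),
      0 < ∫ q : Fin n → ℝ,
            Φ1 t q * Real.exp (-euclidNorm (M q *ᵥ (q - v)) ^ 2 / (2 * (T - t))) := by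
  have hK : Continuous fun z : (Fin n → ℝ) × (Fin n → ℝ) =>
      Real.exp (-euclidNorm (M z.1 *ᵥ z.2) ^ 2 / 2) := by
    have := continuous_euclidNorm.comp ((hM.comp continuous_fst).matrix_mulVec continuous_snd)
    fun_prop
  have hKg (x y : Fin n → ℝ) : |Real.exp (-euclidNorm (M x *ᵥ y) ^ 2 / 2)| ≤
      Real.exp (-(c ^ 2 / 2) * euclidNorm y ^ 2) := by
    rw [Real.abs_exp]
    exact exp_neg_sq_div_two_le hc.le (norm_nonneg _) (hMc x y)
  have hg := integrable_exp_neg_mul_euclidNorm_sq (k := n) (by positivity : 0 < c ^ 2 / 2)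
  have hG : 0 < ∫ y, Real.exp (-euclidNorm (M v *ᵥ y) ^ 2 / 2) :=
    integral_exp_pos <| hg.mono'
      (hK.comp (continuous_const.prodMk continuous_id)).aestronglyMeasurable
      (Eventually.of_forall (hKg v))
  have hf := tendsto_integral_rescaled hT hΦfcont hΦfbdd
    (K := fun x y => Real.exp (-euclidNorm (M x *ᵥ y) ^ 2 / 2)) hK hg hKg v
  have h1 := tendsto_integral_rescaled hT hΦ1cont hΦ1bdd
    (K := fun x y => Real.exp (-euclidNorm (M x *ᵥ y) ^ 2 / 2)) hK hg hKg v
  have hrescale (Φ : ℝ → (Fin n → ℝ) → ℝ) :=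
    eventually_nhdsWithin_of_forall (a := T) fun t (ht : t ∈ Ioo 0 T) =>
      integral_mul_exp_neg_sq_div_eq_rescaled M v (Φ t) (sub_pos.2 ht.2)
  have hscale : ∀ᶠ t in 𝓝[Ioo 0 T] T, 0 < √(T - t) ^ n :=
    eventually_nhdsWithin_of_forall fun t ht => pow_pos (Real.sqrt_pos.2 (sub_pos.2 ht.2)) n
  have h1pos := mul_pos hΦ1pos hG
  constructor
  · rw [← mul_div_mul_right _ _ hG.ne']
    refine (hf.div h1 h1pos.ne').congr' ?_
    filter_upwards [hrescale Φf, hrescale Φ1, hscale] with t hft h1t hst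
    rw [hft, h1t, mul_div_mul_left _ _ hst.ne', Pi.div_apply]
  · filter_upwards [hrescale Φ1, hscale, h1.eventually (eventually_gt_nhds h1pos)]
      with t h1t hst hpos
    rw [h1t]
    exact mul_pos hst hpos

/-- The conclusion of the conditioning lemma: the ratio of the `Φ_f`- and `Φ_1`-weighted
Gaussian integrals converges to `Φ_f(T,v)/Φ_1(T,v)` as `t → T⁻`, and the denominator is
eventually strictly positive. -/
theorem gaussian_ratio_limit (n J : ℕ) (T : ℝ) (hT : 0 < T)
    (M : (Fin n → ℝ) → Matrix (Fin J) (Fin n) ℝ) (hM : Continuous M)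
    (c : ℝ) (hc : 0 < c) (hMc : ∀ x y : Fin n → ℝ, c * euclidNorm y ≤ euclidNorm (M x *ᵥ y))
    (v : Fin n → ℝ)
    (Φf Φ1 : ℝ → (Fin n → ℝ) → ℝ)
    (hΦfcont : ContinuousOn (fun z : ℝ × (Fin n → ℝ) => Φf z.1 z.2)
      (Set.Icc 0 T ×ˢ Set.univ))
    (Cf : ℝ) (hΦfbdd : ∀ t ∈ Set.Icc (0 : ℝ) T, ∀ q : Fin n → ℝ, |Φf t q| ≤ Cf)
    (hΦ1cont : ContinuousOn (fun z : ℝ × (Fin n → ℝ) => Φ1 z.1 z.2)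
      (Set.Icc 0 T ×ˢ Set.univ))
    (C1 : ℝ) (hΦ1bdd : ∀ t ∈ Set.Icc (0 : ℝ) T, ∀ q : Fin n → ℝ, |Φ1 t q| ≤ C1)
    (hΦ1nonneg : ∀ t ∈ Set.Icc (0 : ℝ) T, ∀ q : Fin n → ℝ, 0 ≤ Φ1 t q)
    (hΦ1pos : 0 < Φ1 T v) :
    Filter.Tendsto
      (fun t : ℝ =>
        (∫ q : Fin n → ℝ,
            Φf t q * Real.exp (-euclidNorm (M q *ᵥ (q - v)) ^ 2 / (2 * (T - t))))
          / ∫ q : Fin n → ℝ,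
              Φ1 t q * Real.exp (-euclidNorm (M q *ᵥ (q - v)) ^ 2 / (2 * (T - t))))
      (nhdsWithin T (Set.Ioo 0 T))
      (nhds (Φf T v / Φ1 T v)) ∧
    ∀ᶠ t in nhdsWithin T (Set.Ioo 0 T),
      0 < ∫ q : Fin n → ℝ,
            Φ1 t q * Real.exp (-euclidNorm (M q *ᵥ (q - v)) ^ 2 / (2 * (T - t))) :=
  gaussian_ratio_limit_general n J T hT M hM c hc hMc v Φf Φ1 hΦfcont Cf hΦfbdd hΦ1cont C1 hΦ1bdd
    hΦ1pos
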